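/- arXiv:1305.2052 — 3 statements merged into one kernel-verified Lean document; each statement's English description precedes it below -/
import Mathlib

section
/- Let g ≥ 1 and let I be a subset of {1,…,g}. For indices j,k ∈ {1,…,g} and x ∈ H define F(j,k,x) := ⟨a_j,x⟩·[b_j,[a_k,b_k]] − ⟨b_j,x⟩·[a_j,[a_k,b_k]] + ⟨a_k,x⟩·[b_k,[a_j,b_j]] − ⟨b_k,x⟩·[a_k,[a_j,b_j]] ∈ 𝕃(H), and set θ_I := Σ_{i∈I} [a_i,b_i] ∈ 𝕃(H). Then for every x ∈ H: (i) if x lies in the ℚ-span of {a_i, b_i : i ∉ I}, then Σ_{j∈I} Σ_{k∈I} F(j,k,x) = 0; and (ii) if x lies in the ℚ-span of {a_i, b_i : i ∈ I}, then Σ_{j∈I} Σ_{k∈I} F(j,k,x) = 2·[x, θ_I]. -/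
noncomputable section

/-- `H = ℚ^{2g}`, where `Sum.inl i` indexes the basis vector `aᵢ` and `Sum.inr i`
indexes the basis vector `bᵢ`. -/
abbrev H (g : ℕ) : Type := (Fin g ⊕ Fin g) → ℚ

/-- The basis vector `aᵢ` of `H`. -/
def aa (g : ℕ) (i : Fin g) : H g := Pi.single (Sum.inl i) 1

/-- The basis vector `bᵢ` of `H`. -/
def bb (g : ℕ) (i : Fin g) : H g := Pi.single (Sum.inr i) 1

/-- The standard symplectic form on `H`, with `⟨aᵢ,aⱼ⟩ = ⟨bᵢ,bⱼ⟩ = 0` and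
`⟨aᵢ,bⱼ⟩ = δᵢⱼ = -⟨bⱼ,aᵢ⟩`. -/
def symp (g : ℕ) (x y : H g) : ℚ :=
  ∑ i : Fin g, (x (Sum.inl i) * y (Sum.inr i) - x (Sum.inr i) * y (Sum.inl i))

/-- The free Lie algebra `𝕃(H)` on the vector space `H`, realized as Mathlib's free
Lie algebra on the set of basis indices of `H`. -/
abbrev L (g : ℕ) : Type := FreeLieAlgebra ℚ (Fin g ⊕ Fin g)

/-- The canonical linear embedding `H → 𝕃(H)`. -/
def ιL (g : ℕ) : H g →ₗ[ℚ] L g where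
  toFun x := ∑ s : Fin g ⊕ Fin g, x s • FreeLieAlgebra.of ℚ s
  map_add' x y := by simp [add_smul, Finset.sum_add_distrib]
  map_smul' c x := by simp [smul_smul, Finset.smul_sum]

/-- `F(j,k,x) = ⟨aⱼ,x⟩[bⱼ,[aₖ,bₖ]] − ⟨bⱼ,x⟩[aⱼ,[aₖ,bₖ]] + ⟨aₖ,x⟩[bₖ,[aⱼ,bⱼ]] − ⟨bₖ,x⟩[aₖ,[aⱼ,bⱼ]]`
in the free Lie algebra `𝕃(H)`. -/
def F (g : ℕ) (j k : Fin g) (x : H g) : L g :=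
  symp g (aa g j) x • ⁅ιL g (bb g j), ⁅ιL g (aa g k), ιL g (bb g k)⁆⁆
    - symp g (bb g j) x • ⁅ιL g (aa g j), ⁅ιL g (aa g k), ιL g (bb g k)⁆⁆
    + symp g (aa g k) x • ⁅ιL g (bb g k), ⁅ιL g (aa g j), ιL g (bb g j)⁆⁆
    - symp g (bb g k) x • ⁅ιL g (aa g k), ⁅ιL g (aa g j), ιL g (bb g j)⁆⁆

/-- `θ_I = Σ_{i ∈ I} [aᵢ,bᵢ] ∈ 𝕃(H)`. -/
def θI (g : ℕ) (I : Finset (Fin g)) : L g :=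
  ∑ i ∈ I, ⁅ιL g (aa g i), ιL g (bb g i)⁆

lemma symp_add (g : ℕ) (v x y : H g) : symp g v (x + y) = symp g v x + symp g v y := by
  simp only [symp, Pi.add_apply]
  rw [← Finset.sum_add_distrib]
  exact Finset.sum_congr rfl fun i _ => by ring

lemma symp_smul (g : ℕ) (v : H g) (c : ℚ) (x : H g) : symp g v (c • x) = c * symp g v x := by
  simp only [symp, Pi.smul_apply, smul_eq_mul, Finset.mul_sum]
  exact Finset.sum_congr rfl fun i _ => by ring

lemma symp_aa_aa (g : ℕ) (j i : Fin g) : symp g (aa g j) (aa g i) = 0 := by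
  simp [symp, aa, Pi.single_apply]

lemma symp_bb_bb (g : ℕ) (j i : Fin g) : symp g (bb g j) (bb g i) = 0 := by
  simp [symp, bb, Pi.single_apply]

lemma symp_aa_bb (g : ℕ) (j i : Fin g) : symp g (aa g j) (bb g i) = if j = i then 1 else 0 := by
  by_cases h : j = i <;> simp [symp, aa, bb, Pi.single_apply, Finset.sum_ite_eq, h, eq_comm]

lemma symp_bb_aa (g : ℕ) (j i : Fin g) : symp g (bb g j) (aa g i) = if j = i then -1 else 0 := by
  by_cases h : j = i <;> simp [symp, aa, bb, Pi.single_apply, Finset.sum_ite_eq, h, eq_comm]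

lemma F_add (g : ℕ) (j k : Fin g) (x y : H g) : F g j k (x + y) = F g j k x + F g j k y := by
  simp only [F, symp_add, add_smul]; abel

lemma F_smul (g : ℕ) (j k : Fin g) (c : ℚ) (x : H g) : F g j k (c • x) = c • F g j k x := by
  simp only [F, symp_smul, mul_smul, smul_sub, smul_add]

lemma F_zero (g : ℕ) (j k : Fin g) : F g j k 0 = 0 := by
  simpa using F_smul g j k 0 0

lemma lie_sum' (g : ℕ) (z : L g) (I : Finset (Fin g)) (f : Fin g → L g) :
    ⁅z, ∑ k ∈ I, f k⁆ = ∑ k ∈ I, ⁅z, f k⁆ := by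
  simp only [← LieAlgebra.ad_apply (R := ℚ)]
  exact map_sum _ f I

lemma sum_F_aa (g : ℕ) (I : Finset (Fin g)) (i : Fin g) :
    ∑ j ∈ I, ∑ k ∈ I, F g j k (aa g i) =
      if i ∈ I then (2 : ℚ) • ⁅ιL g (aa g i), θI g I⁆ else 0 := by
  have hF : ∀ j k : Fin g, F g j k (aa g i) =
      (if j = i then ⁅ιL g (aa g j), ⁅ιL g (aa g k), ιL g (bb g k)⁆⁆ else 0)
        + (if k = i then ⁅ιL g (aa g k), ⁅ιL g (aa g j), ιL g (bb g j)⁆⁆ else 0) := by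
    intro j k
    simp only [F, symp_aa_aa, symp_bb_aa, zero_smul]
    split_ifs <;>
      simp only [neg_smul, one_smul, zero_smul, zero_sub, sub_zero, zero_add, add_zero,
        neg_neg, sub_neg_eq_add] <;>
      abel
  simp only [hF, Finset.sum_add_distrib]
  rw [Finset.sum_comm (s := I) (t := I)
    (f := fun j k => if j = i then ⁅ιL g (aa g j), ⁅ιL g (aa g k), ιL g (bb g k)⁆⁆ else 0)]
  simp only [Finset.sum_ite_eq' I i]
  by_cases hi : i ∈ I
  · simp only [hi, if_true]
    rw [θI, lie_sum', two_smul]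
  · simp [hi]

lemma sum_F_bb (g : ℕ) (I : Finset (Fin g)) (i : Fin g) :
    ∑ j ∈ I, ∑ k ∈ I, F g j k (bb g i) =
      if i ∈ I then (2 : ℚ) • ⁅ιL g (bb g i), θI g I⁆ else 0 := by
  have hF : ∀ j k : Fin g, F g j k (bb g i) =
      (if j = i then ⁅ιL g (bb g j), ⁅ιL g (aa g k), ιL g (bb g k)⁆⁆ else 0)
        + (if k = i then ⁅ιL g (bb g k), ⁅ιL g (aa g j), ιL g (bb g j)⁆⁆ else 0) := by
    intro j k
    simp only [F, symp_bb_bb, symp_aa_bb, zero_smul]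
    split_ifs <;>
      simp only [neg_smul, one_smul, zero_smul, zero_sub, sub_zero, zero_add, add_zero,
        neg_neg, sub_neg_eq_add] <;>
      abel
  simp only [hF, Finset.sum_add_distrib]
  rw [Finset.sum_comm (s := I) (t := I)
    (f := fun j k => if j = i then ⁅ιL g (bb g j), ⁅ιL g (aa g k), ιL g (bb g k)⁆⁆ else 0)]
  simp only [Finset.sum_ite_eq' I i]
  by_cases hi : i ∈ I
  · simp only [hi, if_true]
    rw [θI, lie_sum', two_smul]
  · simp [hi]

/-- For a subset `I` of `{1,…,g}`: if `x` lies in the span of `{aᵢ, bᵢ : i ∉ I}` then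
`Σ_{j∈I} Σ_{k∈I} F(j,k,x) = 0`, while if `x` lies in the span of `{aᵢ, bᵢ : i ∈ I}` then
`Σ_{j∈I} Σ_{k∈I} F(j,k,x) = 2·[x, θ_I]`. -/
theorem sum_F_eq (g : ℕ) (hg : 1 ≤ g) (I : Finset (Fin g)) (x : H g) :
    (x ∈ Submodule.span ℚ
        ((fun i => aa g i) '' {i | i ∉ I} ∪ (fun i => bb g i) '' {i | i ∉ I}) →
      ∑ j ∈ I, ∑ k ∈ I, F g j k x = 0) ∧
    (x ∈ Submodule.span ℚ
        ((fun i => aa g i) '' {i | i ∈ I} ∪ (fun i => bb g i) '' {i | i ∈ I}) →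
      ∑ j ∈ I, ∑ k ∈ I, F g j k x = (2 : ℚ) • ⁅ιL g x, θI g I⁆) := by
  constructor
  · intro hx
    induction hx using Submodule.span_induction with
    | mem y hy =>
        rcases hy with ⟨i, hi, rfl⟩ | ⟨i, hi, rfl⟩ <;>
          simp only [Set.mem_setOf_eq] at hi <;>
          simp [sum_F_aa, sum_F_bb, hi]
    | zero => simp [F_zero]
    | add y z hy hz ihy ihz =>
        simp only [F_add, Finset.sum_add_distrib, ihy, ihz, add_zero]
    | smul c y hy ihy =>
        simp only [F_smul, ← Finset.smul_sum, ihy, smul_zero]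
  · intro hx
    induction hx using Submodule.span_induction with
    | mem y hy =>
        rcases hy with ⟨i, hi, rfl⟩ | ⟨i, hi, rfl⟩ <;>
          simp only [Set.mem_setOf_eq] at hi <;>
          simp [sum_F_aa, sum_F_bb, hi]
    | zero => simp [F_zero]
    | add y z hy hz ihy ihz =>
        simp only [F_add, Finset.sum_add_distrib, ihy, ihz, map_add, add_lie, smul_add]
    | smul c y hy ihy =>
        simp only [F_smul, ← Finset.smul_sum, ihy, map_smul, smul_lie]
        rw [smul_comm]
end
end

section
/- Let g ≥ 1 and let u₁, v₁, u₂, v₂ ∈ H. Define f : H → 𝕃(H) by f(x) := ⟨u₁,x⟩·[v₁,[u₂,v₂]] − ⟨v₁,x⟩·[u₁,[u₂,v₂]] + ⟨u₂,x⟩·[v₂,[u₁,v₁]] − ⟨v₂,x⟩·[u₂,[u₁,v₁]]. Then Σ_{i=1}^{g} ( [f(a_i), b_i] + [a_i, f(b_i)] ) = 0 in 𝕃(H). (This is the computation showing that the derivation of the free Lie algebra extending f annihilates the symplectic element θ = Σᵢ [a_i,b_i], so that the map φ̃ of the paper descends to a well-defined map φ : S²Λ²H → Gr^W_{−2} Der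 𝔭 on the quotient 𝕃(H)/(θ).) -/
noncomputable section

lemma ιL_aa (g : ℕ) (i : Fin g) : ιL g (aa g i) = FreeLieAlgebra.of ℚ (Sum.inl i) := by
  simp [ιL, aa, Pi.single_apply]

lemma ιL_bb (g : ℕ) (i : Fin g) : ιL g (bb g i) = FreeLieAlgebra.of ℚ (Sum.inr i) := by
  simp [ιL, bb, Pi.single_apply]

lemma symp_aa (g : ℕ) (u : H g) (i : Fin g) : symp g u (aa g i) = -u (Sum.inr i) := by
  simp [symp, aa, Pi.single_apply]

lemma symp_bb (g : ℕ) (u : H g) (i : Fin g) : symp g u (bb g i) = u (Sum.inl i) := by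
  simp [symp, bb, Pi.single_apply]

lemma key (g : ℕ) (u : H g) (w : L g) :
    ∑ i : Fin g, (symp g u (aa g i) • ⁅w, ιL g (bb g i)⁆
      + symp g u (bb g i) • ⁅ιL g (aa g i), w⁆) = ⁅ιL g u, w⁆ := by
  have h : ⁅ιL g u, w⁆ = ∑ s : Fin g ⊕ Fin g, u s • ⁅FreeLieAlgebra.of ℚ s, w⁆ := by
    show ⁅∑ s : Fin g ⊕ Fin g, u s • FreeLieAlgebra.of ℚ s, w⁆ = _
    exact (map_sum (AddMonoidHom.mk' (fun x : L g => ⁅x, w⁆)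
      (fun a b => add_lie a b w)) _ _).trans (by simp [smul_lie])
  rw [h, Fintype.sum_sum_type, ← Finset.sum_add_distrib]
  apply Finset.sum_congr rfl; intro i _
  rw [symp_aa, symp_bb, ιL_aa, ιL_bb,
    ← lie_skew w (FreeLieAlgebra.of ℚ (Sum.inr i)), smul_neg, neg_smul, neg_neg, add_comm]

/-- The computation showing that for any `u₁, v₁, u₂, v₂ ∈ H` the map
`f : x ↦ ⟨u₁,x⟩[v₁,[u₂,v₂]] − ⟨v₁,x⟩[u₁,[u₂,v₂]] + ⟨u₂,x⟩[v₂,[u₁,v₁]] − ⟨v₂,x⟩[u₂,[u₁,v₁]]`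
extends to a derivation of the free Lie algebra annihilating the symplectic element
`θ = Σᵢ [aᵢ,bᵢ]`, so that `φ̃` descends to `φ : S²Λ²H → Gr^W_{−2} Der 𝔭`. -/
theorem derivation_annihilates_theta (g : ℕ) (hg : 1 ≤ g) (u₁ v₁ u₂ v₂ : H g) :
    let f : H g → L g := fun x =>
      symp g u₁ x • ⁅ιL g v₁, ⁅ιL g u₂, ιL g v₂⁆⁆
        - symp g v₁ x • ⁅ιL g u₁, ⁅ιL g u₂, ιL g v₂⁆⁆
        + symp g u₂ x • ⁅ιL g v₂, ⁅ιL g u₁, ιL g v₁⁆⁆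
        - symp g v₂ x • ⁅ιL g u₂, ⁅ιL g u₁, ιL g v₁⁆⁆
    ∑ i : Fin g, (⁅f (aa g i), ιL g (bb g i)⁆ + ⁅ιL g (aa g i), f (bb g i)⁆) = 0 := by
  intro f
  set A : L g := ⁅ιL g v₁, ⁅ιL g u₂, ιL g v₂⁆⁆ with hA
  set B : L g := ⁅ιL g u₁, ⁅ιL g u₂, ιL g v₂⁆⁆ with hB
  set C : L g := ⁅ιL g v₂, ⁅ιL g u₁, ιL g v₁⁆⁆ with hC
  set D : L g := ⁅ιL g u₂, ⁅ιL g u₁, ιL g v₁⁆⁆ with hD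
  have expand : ∀ i : Fin g,
      ⁅f (aa g i), ιL g (bb g i)⁆ + ⁅ιL g (aa g i), f (bb g i)⁆ =
      (symp g u₁ (aa g i) • ⁅A, ιL g (bb g i)⁆ + symp g u₁ (bb g i) • ⁅ιL g (aa g i), A⁆)
      - (symp g v₁ (aa g i) • ⁅B, ιL g (bb g i)⁆ + symp g v₁ (bb g i) • ⁅ιL g (aa g i), B⁆)
      + (symp g u₂ (aa g i) • ⁅C, ιL g (bb g i)⁆ + symp g u₂ (bb g i) • ⁅ιL g (aa g i), C⁆)
      - (symp g v₂ (aa g i) • ⁅D, ιL g (bb g i)⁆ + symp g v₂ (bb g i) • ⁅ιL g (aa g i), D⁆) := by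
    intro i
    simp only [f, sub_lie, add_lie, smul_lie, lie_sub, lie_add, lie_smul]
    abel
  rw [Finset.sum_congr rfl (fun i _ => expand i)]
  simp only [Finset.sum_add_distrib, Finset.sum_sub_distrib]
  rw [← Finset.sum_add_distrib, ← Finset.sum_add_distrib, ← Finset.sum_add_distrib,
    ← Finset.sum_add_distrib, key g u₁ A, key g v₁ B, key g u₂ C, key g v₂ D]
  have h12 : ⁅ιL g u₁, A⁆ - ⁅ιL g v₁, B⁆ = ⁅⁅ιL g u₁, ιL g v₁⁆, ⁅ιL g u₂, ιL g v₂⁆⁆ :=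
    (lie_lie _ _ _).symm
  have h34 : ⁅ιL g u₂, C⁆ - ⁅ιL g v₂, D⁆ = ⁅⁅ιL g u₂, ιL g v₂⁆, ⁅ιL g u₁, ιL g v₁⁆⁆ :=
    (lie_lie _ _ _).symm
  have : ⁅ιL g u₁, A⁆ - ⁅ιL g v₁, B⁆ + ⁅ιL g u₂, C⁆ - ⁅ιL g v₂, D⁆
      = (⁅ιL g u₁, A⁆ - ⁅ιL g v₁, B⁆) + (⁅ιL g u₂, C⁆ - ⁅ιL g v₂, D⁆) := by abel
  rw [this, h12, h34, ← lie_skew, neg_add_cancel]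
end
end

section
/- If g ≥ 2, then the vector space ⋀⁴H is spanned by the wedge products ω₁∧ω₂ where ω₁, ω₂ range over Λ²₀H = ker Φ. (Equivalently: the cup product map cup : S²Λ²₀H → ⋀⁴H, induced by wedge multiplication, is surjective.) -/
noncomputable section

/-- The canonical inclusion `H → ⋀H` into the exterior algebra. -/
abbrev ιE (g : ℕ) : H g →ₗ[ℚ] ExteriorAlgebra ℚ (H g) := ExteriorAlgebra.ι ℚ

/-- `θ = Σᵢ aᵢ ∧ bᵢ ∈ ⋀²H`. -/
def θE (g : ℕ) : ExteriorAlgebra ℚ (H g) :=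
  ∑ i : Fin g, ιE g (aa g i) * ιE g (bb g i)

/-! ### Auxiliary material -/

/-- The basis vectors of `H`, indexed uniformly. -/
def eb (g : ℕ) (s : Fin g ⊕ Fin g) : H g := Pi.single s 1

lemma symp_eb (g : ℕ) (s t : Fin g ⊕ Fin g) (h : t ≠ s.swap) :
    symp g (eb g s) (eb g t) = 0 := by
  rcases s with i | i <;> rcases t with j | j <;>
    simp_all [symp, eb, Pi.single_apply, Sum.swap, Finset.sum_sub_distrib, Ne, eq_comm]

lemma mul_mem_two (g : ℕ) (x y : H g) :
    ιE g x * ιE g y ∈ (⋀[ℚ]^2 (H g) : Submodule ℚ (ExteriorAlgebra ℚ (H g))) := by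
  show _ ∈ LinearMap.range (ExteriorAlgebra.ι ℚ : H g →ₗ[ℚ] _) ^ 2
  rw [sq]
  exact Submodule.mul_mem_mul (LinearMap.mem_range_self _ _) (LinearMap.mem_range_self _ _)

lemma ιMulti_four (g : ℕ) (v : Fin 4 → H g) :
    ExteriorAlgebra.ιMulti ℚ 4 v = (ιE g (v 0) * ιE g (v 1)) * (ιE g (v 2) * ιE g (v 3)) := by
  rw [ExteriorAlgebra.ιMulti_apply]
  simp only [List.ofFn_succ, List.prod_cons, List.ofFn_zero, List.prod_nil, mul_one, mul_assoc]
  rfl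

/-- The set of products of two primitive elements of `⋀²H`. -/
def Sset (g : ℕ) (Φ : ExteriorAlgebra ℚ (H g) →ₗ[ℚ] ℚ) : Set (ExteriorAlgebra ℚ (H g)) :=
  {x : ExteriorAlgebra ℚ (H g) | ∃ ω₁ ω₂ : ExteriorAlgebra ℚ (H g),
        ω₁ ∈ (⋀[ℚ]^2 (H g) : Submodule ℚ (ExteriorAlgebra ℚ (H g))) ∧ Φ ω₁ = 0 ∧
        ω₂ ∈ (⋀[ℚ]^2 (H g) : Submodule ℚ (ExteriorAlgebra ℚ (H g))) ∧ Φ ω₂ = 0 ∧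
        x = ω₁ * ω₂}

section

variable {g : ℕ} {Φ : ExteriorAlgebra ℚ (H g) →ₗ[ℚ] ℚ}

lemma pair_mem (hΦ : ∀ u v : H g, Φ (ιE g u * ιE g v) = symp g u v) (r : Fin 4 → Fin g ⊕ Fin g) (h1 : r 1 ≠ (r 0).swap) (h2 : r 3 ≠ (r 2).swap) :
    ExteriorAlgebra.ιMulti ℚ 4 (fun i => eb g (r i)) ∈ Submodule.span ℚ (Sset g Φ) := by
  rw [ιMulti_four]
  exact Submodule.subset_span ⟨_, _, mul_mem_two g _ _,
    by rw [hΦ]; exact symp_eb g _ _ h1, mul_mem_two g _ _,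
    by rw [hΦ]; exact symp_eb g _ _ h2, rfl⟩

lemma W_zero (r : Fin 4 → Fin g ⊕ Fin g) (i j : Fin 4) (hij : i ≠ j) (h : r i = r j) :
    ExteriorAlgebra.ιMulti ℚ 4 (fun i => eb g (r i)) = 0 :=
  AlternatingMap.map_eq_zero_of_eq _ _ (by rw [h]) hij

lemma W_mem (hΦ : ∀ u v : H g, Φ (ιE g u * ιE g v) = symp g u v) (r : Fin 4 → Fin g ⊕ Fin g) :
    ExteriorAlgebra.ιMulti ℚ 4 (fun i => eb g (r i)) ∈ Submodule.span ℚ (Sset g Φ) := by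
  by_cases h1 : r 1 ≠ (r 0).swap ∧ r 3 ≠ (r 2).swap
  · exact pair_mem hΦ r h1.1 h1.2
  by_cases h2 : r 2 ≠ (r 0).swap ∧ r 3 ≠ (r 1).swap
  · -- swap positions 1 and 2
    have hsw := AlternatingMap.map_swap (ExteriorAlgebra.ιMulti ℚ 4 (M := H g))
      (fun i => eb g (r i)) (show (1 : Fin 4) ≠ 2 by decide)
    have e0 : Equiv.swap (1 : Fin 4) 2 0 = 0 := by decide
    have e1 : Equiv.swap (1 : Fin 4) 2 1 = 2 := by decide
    have e2 : Equiv.swap (1 : Fin 4) 2 2 = 1 := by decide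
    have e3 : Equiv.swap (1 : Fin 4) 2 3 = 3 := by decide
    have hc : ((fun i => eb g (r i)) ∘ Equiv.swap (1 : Fin 4) 2)
        = fun i => eb g ((r ∘ Equiv.swap (1 : Fin 4) 2) i) := rfl
    rw [← neg_neg (ExteriorAlgebra.ιMulti ℚ 4 fun i => eb g (r i)), ← hsw, hc]
    refine neg_mem (pair_mem hΦ (r ∘ Equiv.swap (1 : Fin 4) 2) ?_ ?_)
    · show r (Equiv.swap (1 : Fin 4) 2 1) ≠ (r (Equiv.swap (1 : Fin 4) 2 0)).swap
      rw [e1, e0]; exact h2.1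
    · show r (Equiv.swap (1 : Fin 4) 2 3) ≠ (r (Equiv.swap (1 : Fin 4) 2 2)).swap
      rw [e3, e2]; exact h2.2
  · -- duplicates: the wedge is zero
    rw [not_and_or, not_not, not_not] at h1 h2
    have : ExteriorAlgebra.ιMulti ℚ 4 (fun i => eb g (r i)) = 0 := by
      rcases h1 with h1 | h1 <;> rcases h2 with h2 | h2
      · exact W_zero r 1 2 (by decide) (h1.trans h2.symm)
      · exact W_zero r 3 0 (by decide) (by rw [h2, h1, Sum.swap_swap])
      · exact W_zero r 3 0 (by decide) (by rw [h1, h2, Sum.swap_swap])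
      · refine W_zero r 1 2 (by decide) ?_
        have h3 : (r 1).swap.swap = (r 2).swap.swap := congrArg Sum.swap (h2.symm.trans h1)
        rwa [Sum.swap_swap, Sum.swap_swap] at h3
    rw [this]
    exact Submodule.zero_mem _

lemma ιMulti_mem (hΦ : ∀ u v : H g, Φ (ιE g u * ιE g v) = symp g u v) (v : Fin 4 → H g) :
    ExteriorAlgebra.ιMulti ℚ 4 v ∈ Submodule.span ℚ (Sset g Φ) := by
  have hv : v = fun i => ∑ s : Fin g ⊕ Fin g, v i s • eb g s := by
    funext i t
    simp [eb, Pi.single_apply, Finset.sum_apply, mul_ite]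
  have key : ExteriorAlgebra.ιMulti ℚ 4 v
      = ∑ r : Fin 4 → Fin g ⊕ Fin g,
          (∏ i, v i (r i)) • ExteriorAlgebra.ιMulti ℚ 4 (fun i => eb g (r i)) := by
    conv_lhs => rw [hv]
    rw [show (ExteriorAlgebra.ιMulti ℚ 4 (fun i => ∑ s : Fin g ⊕ Fin g, v i s • eb g s))
        = (ExteriorAlgebra.ιMulti ℚ 4 (M := H g)).toMultilinearMap
            (fun i => ∑ s : Fin g ⊕ Fin g, v i s • eb g s) from rfl,
      MultilinearMap.map_sum]
    refine Finset.sum_congr rfl fun r _ => ?_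
    exact MultilinearMap.map_smul_univ _ _ _
  rw [key]
  exact Submodule.sum_mem _ fun r _ => Submodule.smul_mem _ _ (W_mem hΦ r)

end

/-- If `g ≥ 2` then `⋀⁴H` is spanned by the products `ω₁ ∧ ω₂` where `ω₁, ω₂` range over
`Λ²₀H = ker Φ`, `Φ : ⋀²H → ℚ` being the unique linear map with `Φ(u ∧ v) = ⟨u,v⟩`;
i.e. the cup product `S²Λ²₀H → ⋀⁴H` is surjective. -/
theorem span_products_of_primitive_eq_fourth_exterior_power (g : ℕ) (hg : 2 ≤ g)
    (Φ : ExteriorAlgebra ℚ (H g) →ₗ[ℚ] ℚ)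
    (hΦ : ∀ u v : H g, Φ (ιE g u * ιE g v) = symp g u v) :
    Submodule.span ℚ {x : ExteriorAlgebra ℚ (H g) | ∃ ω₁ ω₂ : ExteriorAlgebra ℚ (H g),
        ω₁ ∈ (⋀[ℚ]^2 (H g) : Submodule ℚ (ExteriorAlgebra ℚ (H g))) ∧ Φ ω₁ = 0 ∧
        ω₂ ∈ (⋀[ℚ]^2 (H g) : Submodule ℚ (ExteriorAlgebra ℚ (H g))) ∧ Φ ω₂ = 0 ∧
        x = ω₁ * ω₂} =
      (⋀[ℚ]^4 (H g) : Submodule ℚ (ExteriorAlgebra ℚ (H g))) := by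
  apply le_antisymm
  · rw [Submodule.span_le]
    rintro x ⟨ω₁, ω₂, h₁, -, h₂, -, rfl⟩
    show ω₁ * ω₂ ∈ LinearMap.range (ExteriorAlgebra.ι ℚ : H g →ₗ[ℚ] _) ^ 4
    have : LinearMap.range (ExteriorAlgebra.ι ℚ : H g →ₗ[ℚ] _) ^ 4
        = LinearMap.range (ExteriorAlgebra.ι ℚ : H g →ₗ[ℚ] _) ^ 2
          * LinearMap.range (ExteriorAlgebra.ι ℚ : H g →ₗ[ℚ] _) ^ 2 := by
      rw [← pow_add]
    rw [this]
    exact Submodule.mul_mem_mul h₁ h₂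
  · rw [← ExteriorAlgebra.ιMulti_span_fixedDegree ℚ 4, Submodule.span_le]
    rintro x ⟨v, rfl⟩
    exact ιMulti_mem hΦ v
end
end
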